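/- arXiv:1611.04700 — 5 statements merged into one kernel-verified Lean document; each statement's English description precedes it below -/
import Mathlib

section
/- Let α ∈ S_n and let σ = (a₁ a₂ … a_d) be a d-cycle in S_n. If a₁,…,a_d all lie in pairwise distinct cycles of α, of lengths i₁,…,i_d respectively, then in σα the points a₁,…,a_d all lie in one common cycle of length i₁ + ⋯ + i_d, and all other cycles of α are unchanged. -/
/-! Put `β = σα`. Along the `α`-cycle of `a k`, `β` agrees with `α` until that cycle would
close up at `a k`; there `σ` sends it on to `a (k + 1)` instead. Hence `β ^ i k` maps `a k` to
`a (k + 1)`, and `β ^ (i₁ + ⋯ + i_d)` fixes `a k`. Conversely, the `β`-cycle of `a k` passes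
through all `i₁ + ⋯ + i_d` points of the `α`-cycles of `a₁, …, a_d`, which are pairwise distinct,
so its length is at least that sum. -/

open Function Finset Fin.NatCast

theorem Function.card_le_minimalPeriod {X : Type*} [DecidableEq X] {f : X → X} {x : X}
    (hx : x ∈ periodicPts f) {s : Finset X} (hs : ∀ y ∈ s, ∃ m, f^[m] x = y) :
    #s ≤ minimalPeriod f x := by
  have hsub : s ⊆ (range (minimalPeriod f x)).image (f^[·] x) := by
    intro y hy
    obtain ⟨m, rfl⟩ := hs y hy
    exact mem_image.2 ⟨m % minimalPeriod f x,
      mem_range.2 (Nat.mod_lt _ (minimalPeriod_pos_of_mem_periodicPts hx)),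
      iterate_mod_minimalPeriod_eq⟩
  calc #s ≤ #((range (minimalPeriod f x)).image (f^[·] x)) := card_le_card hsub
    _ ≤ #(range (minimalPeriod f x)) := card_image_le
    _ = minimalPeriod f x := card_range _

theorem Fin.sum_range_add_left {M : Type*} [AddCommMonoid M] {d : ℕ} [NeZero d]
    (f : Fin d → M) (k : Fin d) : ∑ s ∈ range d, f (k + (s : Fin d)) = ∑ j, f j := by
  rw [← Fin.sum_univ_eq_sum_range (fun s => f (k + (s : Fin d)))]
  simp only [Fin.cast_val_eq_self]
  exact Fintype.sum_equiv (Equiv.addLeft k) _ _ fun _ => rfl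

namespace Equiv.Perm

theorem minimalPeriod_pos {X : Type*} [Finite X] (α : Perm X) (x : X) : 0 < minimalPeriod α x :=
  MulAction.period_pos_of_orderOf_pos (orderOf_pos α) x

variable {X : Type*} {d : ℕ} {α : Perm X} {a : Fin d → X}

theorem pow_apply_notMem_range_of_lt_minimalPeriod
    (hdist : Pairwise fun k l => ¬ α.SameCycle (a k) (a l)) {k : Fin d} {r : ℕ} (hr0 : 0 < r)
    (hr : r < minimalPeriod α (a k)) : (α ^ r) (a k) ∉ Set.range a := by
  rintro ⟨l, hl⟩
  obtain rfl | hkl := eq_or_ne k l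
  · refine not_isPeriodicPt_of_pos_of_lt_minimalPeriod hr0.ne' hr ?_
    rw [IsPeriodicPt, IsFixedPt, ← coe_pow]
    exact hl.symm
  · exact hdist hkl ⟨r, by simp [hl]⟩

theorem injOn_sigma_pow_apply
    (hdist : Pairwise fun k l => ¬ α.SameCycle (a k) (a l)) :
    Set.InjOn (fun x : (_ : Fin d) × ℕ => (α ^ x.2) (a x.1))
      (univ.sigma fun j => range (minimalPeriod α (a j))) := by
  rintro ⟨j, r⟩ hr ⟨l, r'⟩ hr' h
  simp only [coe_sigma, Set.mem_sigma_iff, coe_range, Set.mem_Iio] at hr hr' h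
  obtain rfl : j = l := by
    by_contra hjl
    have hrr' : α.SameCycle ((α ^ r) (a j)) ((α ^ r') (a l)) := h ▸ SameCycle.refl _ _
    exact hdist hjl (sameCycle_pow_left.1 (sameCycle_pow_right.1 hrr'))
  obtain rfl : r = r' :=
    iterate_injOn_Iio_minimalPeriod (f := α) hr.2 hr'.2 (by simpa only [coe_pow] using h)
  rfl

theorem injective_of_pairwise_not_sameCycle
    (hdist : Pairwise fun k l => ¬ α.SameCycle (a k) (a l)) : Injective a :=
  injective_iff_pairwise_ne.2 <| hdist.mono fun _ _ h hkl => h (hkl ▸ SameCycle.refl _ _)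

variable [DecidableEq X]

theorem formPerm_ofFn_apply_of_notMem_range {x : X} (hx : x ∉ Set.range a) :
    (List.ofFn a).formPerm x = x :=
  List.formPerm_apply_of_notMem (by rwa [List.mem_ofFn])

theorem formPerm_ofFn_apply_self [NeZero d] (ha : Injective a) (j : Fin d) :
    (List.ofFn a).formPerm (a j) = a (j + 1) := by
  have h := List.formPerm_apply_getElem _ (List.nodup_ofFn.2 ha) j (by simp)
  simp only [List.getElem_ofFn, List.length_ofFn] at h
  rw [h]
  congr 1
  ext
  simp [Fin.val_add]

theorem formPerm_ofFn_mul_apply_of_forall_not_sameCycle {x : X}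
    (hx : ∀ k, ¬ α.SameCycle x (a k)) : ((List.ofFn a).formPerm * α) x = α x := by
  refine formPerm_ofFn_apply_of_notMem_range ?_
  rintro ⟨k, hk⟩
  exact hx k ⟨1, by simp [hk]⟩

section JoinCycles

variable (hdist : Pairwise fun k l => ¬ α.SameCycle (a k) (a l))
include hdist

theorem formPerm_ofFn_mul_pow_apply_of_lt {k : Fin d} {r : ℕ} (hr : r < minimalPeriod α (a k)) :
    (((List.ofFn a).formPerm * α) ^ r) (a k) = (α ^ r) (a k) := by
  induction r with
  | zero => rfl
  | succ r ih =>
    rw [pow_succ', mul_apply, ih (by omega), mul_apply, ← mul_apply α, ← pow_succ']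
    exact formPerm_ofFn_apply_of_notMem_range
      (pow_apply_notMem_range_of_lt_minimalPeriod hdist r.succ_pos hr)

theorem formPerm_ofFn_mul_pow_minimalPeriod_apply [Finite X] [NeZero d] (k : Fin d) :
    (((List.ofFn a).formPerm * α) ^ minimalPeriod α (a k)) (a k) = a (k + 1) := by
  obtain ⟨p, hp⟩ := Nat.exists_eq_add_one.2 (minimalPeriod_pos α (a k))
  have hlt : p < minimalPeriod α (a k) := by omega
  rw [hp, pow_succ', mul_apply, formPerm_ofFn_mul_pow_apply_of_lt hdist hlt, mul_apply,
    ← mul_apply α, ← pow_succ', ← hp, coe_pow, iterate_minimalPeriod]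
  exact formPerm_ofFn_apply_self (injective_of_pairwise_not_sameCycle hdist) k

theorem formPerm_ofFn_mul_pow_sum_apply [Finite X] [NeZero d] (k : Fin d) (t : ℕ) :
    (((List.ofFn a).formPerm * α) ^ ∑ s ∈ range t, minimalPeriod α (a (k + (s : Fin d)))) (a k)
      = a (k + (t : Fin d)) := by
  induction t with
  | zero => simp
  | succ t ih =>
    rw [sum_range_succ, add_comm, pow_add, mul_apply, ih,
      formPerm_ofFn_mul_pow_minimalPeriod_apply hdist, Nat.cast_succ, add_assoc]

theorem formPerm_ofFn_mul_pow_sum_minimalPeriod_apply [Finite X] [NeZero d] (k : Fin d) :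
    (((List.ofFn a).formPerm * α) ^ ∑ j, minimalPeriod α (a j)) (a k) = a k := by
  rw [← Fin.sum_range_add_left _ k, formPerm_ofFn_mul_pow_sum_apply hdist, Fin.natCast_self,
    add_zero]

theorem exists_formPerm_ofFn_mul_pow_apply_eq [Finite X] (k l : Fin d) :
    ∃ m : ℕ, (((List.ofFn a).formPerm * α) ^ m) (a k) = a l := by
  have : NeZero d := NeZero.of_pos k.pos
  refine ⟨_, (formPerm_ofFn_mul_pow_sum_apply hdist k ((l - k : Fin d) : ℕ)).trans ?_⟩
  rw [Fin.cast_val_eq_self, add_sub_cancel]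

theorem sameCycle_formPerm_ofFn_mul [Finite X] (k l : Fin d) :
    ((List.ofFn a).formPerm * α).SameCycle (a k) (a l) :=
  let ⟨m, hm⟩ := exists_formPerm_ofFn_mul_pow_apply_eq hdist k l
  ⟨m, by rwa [zpow_natCast]⟩

theorem sum_minimalPeriod_le_minimalPeriod_formPerm_ofFn_mul [Finite X] (k : Fin d) :
    ∑ j, minimalPeriod α (a j) ≤ minimalPeriod ((List.ofFn a).formPerm * α) (a k) := by
  set s := univ.sigma fun j => range (minimalPeriod α (a j))
  calc ∑ j, minimalPeriod α (a j) = #(s.image fun x => (α ^ x.2) (a x.1)) := by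
        rw [card_image_of_injOn (injOn_sigma_pow_apply hdist), card_sigma]
        simp only [card_range]
    _ ≤ _ := by
      refine card_le_minimalPeriod
        (minimalPeriod_pos_iff_mem_periodicPts.1 (minimalPeriod_pos _ _)) ?_
      simp only [s, mem_image, mem_sigma, mem_univ, mem_range, true_and]
      rintro _ ⟨⟨j, r⟩, hr, rfl⟩
      obtain ⟨m, hm⟩ := exists_formPerm_ofFn_mul_pow_apply_eq hdist k j
      refine ⟨r + m, ?_⟩
      rw [← coe_pow, pow_add, mul_apply, hm, formPerm_ofFn_mul_pow_apply_of_lt hdist hr]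

theorem minimalPeriod_formPerm_ofFn_mul [Finite X] (k : Fin d) :
    minimalPeriod ((List.ofFn a).formPerm * α) (a k) = ∑ j, minimalPeriod α (a j) := by
  have : NeZero d := NeZero.of_pos k.pos
  refine le_antisymm ?_ (sum_minimalPeriod_le_minimalPeriod_formPerm_ofFn_mul hdist k)
  refine IsPeriodicPt.minimalPeriod_le
    (sum_pos (fun j _ => minimalPeriod_pos α (a j)) univ_nonempty) ?_
  rw [IsPeriodicPt, IsFixedPt, ← coe_pow]
  exact formPerm_ofFn_mul_pow_sum_minimalPeriod_apply hdist k

end JoinCycles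

end Equiv.Perm

theorem join_cycles_general (n d : ℕ) (α : Equiv.Perm (Fin n)) (a : Fin d → Fin n)
    (i : Fin d → ℕ)
    (hdist : ∀ k l, k ≠ l → ¬ α.SameCycle (a k) (a l))
    (hlen : ∀ k, Function.minimalPeriod ⇑α (a k) = i k) :
    (∀ k l : Fin d, ((List.ofFn a).formPerm * α).SameCycle (a k) (a l)) ∧
    (∀ k : Fin d,
        Function.minimalPeriod ⇑((List.ofFn a).formPerm * α) (a k) = ∑ k, i k) ∧
    (∀ x : Fin n, (∀ k, ¬ α.SameCycle x (a k)) →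
        ((List.ofFn a).formPerm * α) x = α x) := by
  obtain rfl : i = fun k => minimalPeriod α (a k) := funext fun k => (hlen k).symm
  have hdist' : Pairwise fun k l => ¬ α.SameCycle (a k) (a l) := fun k l => hdist k l
  exact ⟨Equiv.Perm.sameCycle_formPerm_ofFn_mul hdist',
    Equiv.Perm.minimalPeriod_formPerm_ofFn_mul hdist',
    fun _ => Equiv.Perm.formPerm_ofFn_mul_apply_of_forall_not_sameCycle⟩

/-- Let `α ∈ S_n` and `σ = (a₁ a₂ … a_d)` a `d`-cycle.  If `a₁,…,a_d` lie in pairwise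
distinct cycles of `α`, of lengths `i₁,…,i_d`, then in `σα` (apply `α` first) the points
`a₁,…,a_d` all lie in one common cycle of length `i₁ + ⋯ + i_d`, and all other cycles
of `α` are unchanged. -/
theorem join_cycles (n d : ℕ) (α : Equiv.Perm (Fin n)) (a : Fin d → Fin n)
    (ha : Function.Injective a) (i : Fin d → ℕ)
    (hdist : ∀ k l, k ≠ l → ¬ α.SameCycle (a k) (a l))
    (hlen : ∀ k, Function.minimalPeriod ⇑α (a k) = i k) :
    (∀ k l : Fin d, ((List.ofFn a).formPerm * α).SameCycle (a k) (a l)) ∧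
    (∀ k : Fin d,
        Function.minimalPeriod ⇑((List.ofFn a).formPerm * α) (a k) = ∑ k, i k) ∧
    (∀ x : Fin n, (∀ k, ¬ α.SameCycle x (a k)) →
        ((List.ofFn a).formPerm * α) x = α x) :=
  join_cycles_general n d α a i hdist hlen
end

section
/- Let α ∈ S_n be an n-cycle and let σ be a transposition (a b) with a ≠ b. Then σα has exactly two cycles, of lengths m and n−m, where m is the smallest positive integer with α^m(a) = b. -/
/-!
Put `e k = α^k a`. Since `α` is an `n`-cycle, `e` is a bijection `Fin n → Fin n` with
`α ∘ e = e ∘ finRotate n`, `e 0 = a` and `e m = b`, so conjugating by `e` turns `(a b) α` into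
`(0 m) ∘ finRotate n`. That permutation sends `k ↦ k + 1` except `m - 1 ↦ 0` and `n - 1 ↦ m`,
i.e. it is the product of the disjoint cycles `(0 1 … m-1)` and `(m m+1 … n-1)`.
Minimality of `m` is what gives `m < n`, hence `e m = b`.
-/

/-- The full cycle type of a permutation of `Fin n`: the lengths of the nontrivial
cycles together with one part `1` for each fixed point. -/
def fullCycleType (n : ℕ) (σ : Equiv.Perm (Fin n)) : Multiset ℕ :=
  σ.cycleType + Multiset.replicate (n - σ.support.card) 1

open Equiv Finset

namespace Equiv.Perm

variable {α : Type*} [Fintype α] [DecidableEq α]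

/-- The cycle type of `σ` viewed as a permutation of a `k`-element set containing its support,
with fixed points counted as `1`-cycles; meaningful when `#σ.support ≤ k`. -/
def paddedCycleType (k : ℕ) (σ : Perm α) : Multiset ℕ :=
  σ.cycleType + Multiset.replicate (k - #σ.support) 1

theorem paddedCycleType_one (k : ℕ) :
    paddedCycleType k (1 : Perm α) = Multiset.replicate k 1 := by
  simp [paddedCycleType]

theorem IsCycle.paddedCycleType {σ : Perm α} (hσ : σ.IsCycle) :
    paddedCycleType #σ.support σ = {#σ.support} := by
  simp [Perm.paddedCycleType, hσ.cycleType]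

theorem Disjoint.paddedCycleType_mul {σ τ : Perm α} (h : Disjoint σ τ) {p q : ℕ}
    (hp : #σ.support ≤ p) (hq : #τ.support ≤ q) :
    paddedCycleType (p + q) (σ * τ) = paddedCycleType p σ + paddedCycleType q τ := by
  rw [paddedCycleType, h.cycleType_mul, h.card_support_mul,
    show p + q - (#σ.support + #τ.support) = (p - #σ.support) + (q - #τ.support) by omega,
    Multiset.replicate_add, paddedCycleType, paddedCycleType]
  abel

theorem paddedCycleType_conj (k : ℕ) (σ τ : Perm α) :
    paddedCycleType k (τ * σ * τ⁻¹) = paddedCycleType k σ := by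
  rw [paddedCycleType, cycleType_conj, card_support_conj, paddedCycleType]

end Equiv.Perm

open Equiv.Perm

namespace Fin

variable {n : ℕ}

theorem support_cycleIcc_subset (i j : Fin n) : (cycleIcc i j).support ⊆ Icc i j := fun _ hx =>
  have hx := mem_support.1 hx
  mem_Icc.2 ⟨not_lt.1 fun h => hx (cycleIcc_of_lt h), not_lt.1 fun h => hx (cycleIcc_of_gt h)⟩

theorem card_support_cycleIcc_le (i j : Fin n) : #(cycleIcc i j).support ≤ j - i + 1 :=
  (card_le_card (support_cycleIcc_subset i j)).trans (by rw [Fin.card_Icc]; omega)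

theorem paddedCycleType_cycleIcc [NeZero n] {i j : Fin n} (hij : i ≤ j) :
    paddedCycleType (j - i + 1) (cycleIcc i j) = {(j : ℕ) - i + 1} := by
  rcases hij.eq_or_lt with rfl | hij
  · rw [cycleIcc_eq, paddedCycleType_one]
    simp
  · have hcard : #(cycleIcc i j).support = j - i + 1 := by
      rw [← sum_cycleType, cycleType_cycleIcc_of_lt hij, Multiset.sum_singleton]
    rw [← hcard]
    exact (isCycle_cycleIcc hij).paddedCycleType

theorem disjoint_cycleIcc_cycleIcc {i j k l : Fin n} (hjk : j < k) :
    Disjoint (cycleIcc i j) (cycleIcc k l) := fun x =>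
  (lt_or_ge j x).imp cycleIcc_of_gt fun hx => cycleIcc_of_lt (hx.trans_lt hjk)

theorem swap_zero_mul_finRotate {i : Fin (n + 1)} (hi : i ≠ 0) :
    swap 0 i * finRotate (n + 1) = cycleIcc 0 (i - 1) * cycleIcc i (last n) := by
  refine Equiv.ext fun k => ?_
  have hi1 : ((i - 1 : Fin (n + 1)) : ℕ) = i - 1 := val_sub_one_of_ne_zero hi
  have hi0 : 0 < (i : ℕ) := Fin.pos_iff_ne_zero.2 hi
  have hval := val_add_one k
  rw [Perm.mul_apply, Perm.mul_apply, finRotate_apply]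
  rcases lt_or_ge k i with hk | hk
  · rw [if_neg (hk.trans_le (le_last i)).ne] at hval
    rw [cycleIcc_of_lt hk, cycleIcc_of_le_of_le (Fin.zero_le _) (Fin.le_def.2 (by omega))]
    split_ifs with hki
    · rw [show k + 1 = i by simp only [Fin.ext_iff] at hki ⊢; omega, swap_apply_right]
    · simp only [Fin.ext_iff] at hki
      refine swap_apply_of_ne_of_ne ?_ ?_ <;> simp only [ne_eq, Fin.ext_iff, val_zero] <;> omega
  · rw [cycleIcc_of_le_of_le hk (le_last k)]
    split_ifs with hkl
    · rw [hkl, last_add_one, swap_apply_left, cycleIcc_of_gt (Fin.lt_def.2 (by omega))]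
    · rw [if_neg hkl] at hval
      rw [cycleIcc_of_gt (Fin.lt_def.2 (by omega))]
      refine swap_apply_of_ne_of_ne ?_ ?_ <;> simp only [ne_eq, Fin.ext_iff, val_zero] <;> omega

theorem paddedCycleType_swap_zero_mul_finRotate {i : Fin (n + 1)} (hi : i ≠ 0) :
    paddedCycleType (n + 1) (swap 0 i * finRotate (n + 1)) = {(i : ℕ), n + 1 - i} := by
  have hi1 : ((i - 1 : Fin (n + 1)) : ℕ) = i - 1 := val_sub_one_of_ne_zero hi
  have hi0 : 0 < (i : ℕ) := Fin.pos_iff_ne_zero.2 hi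
  have hdisj : Disjoint (cycleIcc 0 (i - 1)) (cycleIcc i (last n)) :=
    disjoint_cycleIcc_cycleIcc (Fin.lt_def.2 (by omega))
  have h1 := paddedCycleType_cycleIcc (zero_le (i - 1))
  have h2 := paddedCycleType_cycleIcc (le_last i)
  rw [hi1, val_zero, Nat.sub_zero, Nat.sub_add_cancel hi0] at h1
  rw [val_last, ← Nat.sub_add_comm i.is_le] at h2
  calc paddedCycleType (n + 1) (swap 0 i * finRotate (n + 1))
      = paddedCycleType (i + (n + 1 - i)) (cycleIcc 0 (i - 1) * cycleIcc i (last n)) := by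
        rw [swap_zero_mul_finRotate hi, Nat.add_sub_cancel' i.is_lt.le]
    _ = {(i : ℕ)} + {n + 1 - i} := by
        rw [hdisj.paddedCycleType_mul ((card_support_cycleIcc_le _ _).trans (by omega))
          ((card_support_cycleIcc_le _ _).trans (by rw [val_last]; omega)), h1, h2]

end Fin

namespace Equiv.Perm

theorem IsCycle.exists_mul_eq_mul_finRotate {n : ℕ} {α : Perm (Fin n)} (hα : α.IsCycle)
    (hsupp : #α.support = n) (a : Fin n) :
    ∃ e : Perm (Fin n), (∀ k : Fin n, e k = (α ^ (k : ℕ)) a) ∧ α * e = e * finRotate n := by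
  have ha : α a ≠ a :=
    mem_support.1 ((eq_univ_of_card _ (by rw [hsupp, Fintype.card_fin])) ▸ mem_univ a)
  have hord : orderOf α = n := by rw [hα.orderOf, hsupp]
  have hinj : Function.Injective fun k : Fin n => (α ^ (k : ℕ)) a := by
    intro i j hij
    have := hα.pow_eq_pow_iff.2 ⟨a, ha, hij⟩
    rw [pow_inj_mod, hord, Nat.mod_eq_of_lt i.is_lt, Nat.mod_eq_of_lt j.is_lt] at this
    exact Fin.ext this
  refine ⟨Equiv.ofBijective _ (Finite.injective_iff_bijective.1 hinj), fun k => rfl, ?_⟩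
  refine Equiv.ext fun k => ?_
  have := k.neZero
  rw [Perm.mul_apply, Perm.mul_apply, ofBijective_apply, ofBijective_apply, finRotate_apply,
    Fin.val_add, Fin.val_one', Nat.add_mod_mod]
  have hmod := pow_mod_orderOf α ((k : ℕ) + 1)
  rw [hord] at hmod
  rw [hmod, pow_succ', mul_apply]

end Equiv.Perm

theorem cut_n_cycle_general (n : ℕ) (α : Equiv.Perm (Fin n))
    (hα : α.IsCycle ∧ α.support.card = n) (a b : Fin n) (hab : a ≠ b)
    (m : ℕ) (hmab : (α ^ m) a = b)
    (hmin : ∀ l, 0 < l → l < m → (α ^ l) a ≠ b) :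
    fullCycleType n (Equiv.swap a b * α) = {m, n - m} := by
  have hmn : m < n := by
    by_contra! h
    have hmod := pow_mod_orderOf α m
    rw [hα.1.orderOf, hα.2] at hmod
    refine hmin (m % n) (Nat.pos_of_ne_zero fun h0 => hab ?_)
      ((Nat.mod_lt m a.pos).trans_le h) (by rw [hmod, hmab])
    rw [← hmab, ← hmod, h0, pow_zero, one_apply]
  obtain ⟨e, he, hαe⟩ := hα.1.exists_mul_eq_mul_finRotate hα.2 a
  obtain ⟨n, rfl⟩ : ∃ k, n = k + 1 := ⟨n - 1, by omega⟩
  have hi : (⟨m, hmn⟩ : Fin (n + 1)) ≠ 0 := fun h => hab <| by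
    rw [← hmab, show m = 0 from congrArg Fin.val h, pow_zero, one_apply]
  have hswap : swap a b = e * swap 0 ⟨m, hmn⟩ * e⁻¹ := by
    rw [← swap_apply_apply, he, he]
    simp [hmab]
  have hα' : α = e * finRotate (n + 1) * e⁻¹ := by rw [← hαe, mul_inv_cancel_right]
  calc fullCycleType (n + 1) (swap a b * α)
      = paddedCycleType (n + 1) (e * (swap 0 ⟨m, hmn⟩ * finRotate (n + 1)) * e⁻¹) := by
        rw [hswap, hα']
        simp only [mul_assoc, inv_mul_cancel_left]
        rfl
    _ = {m, n + 1 - m} := by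
        rw [paddedCycleType_conj, Fin.paddedCycleType_swap_zero_mul_finRotate hi]

/-- Let `α ∈ S_n` be an `n`-cycle and `σ = (a b)` a transposition.  Then `σα`
(apply `α` first) has exactly two cycles, of lengths `m` and `n - m`, where `m` is the
smallest positive integer with `α^m(a) = b`. -/
theorem cut_n_cycle (n : ℕ) (α : Equiv.Perm (Fin n))
    (hα : α.IsCycle ∧ α.support.card = n) (a b : Fin n) (hab : a ≠ b)
    (m : ℕ) (hm : 0 < m) (hmab : (α ^ m) a = b)
    (hmin : ∀ l, 0 < l → l < m → (α ^ l) a ≠ b) :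
    fullCycleType n (Equiv.swap a b * α) = {m, n - m} :=
  cut_n_cycle_general n α hα a b hab m hmab hmin
end

section
/- Let α be an n-cycle in S_n and let d ≤ n. Fix positive integers i₁,…,i_d with i₁ + ⋯ + i_d = n. Then the number of d-tuples (j₁,…,j_d) of distinct elements of {1,…,n} such that α^{i_k}(j_k) = j_{k+1 mod d} for all k (and i_k is minimal with α^{i_k}(j_k) ∈ {j₁,…,j_d}) equals n. -/
/-!
Write `s k = i 0 + ⋯ + i (k - 1)`. Since `α ^ i k` sends `j k` to `j (k + 1)`, a tuple as in the
theorem is determined by `x = j 0`, namely `j k = α ^ (s k) x`. Conversely this tuple qualifies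
for every `x`: the partial sums `0 = s 0 < ⋯ < s (d - 1) < n` are distinct residues modulo the
order `n` of `α`, `s k + i k` is `s (k + 1)` or, for the last `k`, `n ≡ s 0`, and no partial sum
lies strictly between `s k` and `s k + i k`. Hence `j ↦ j 0` is a bijection onto the `n` points.
-/

open Finset

variable {X : Type*} {σ : Equiv.Perm X}

theorem Equiv.Perm.IsCycle.isCycleOn_univ [Fintype X] [DecidableEq X] (hσ : σ.IsCycle)
    (hcard : #σ.support = Fintype.card X) : σ.IsCycleOn .univ := by
  have hsupp : σ.support = univ := eq_univ_of_card _ hcard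
  convert hσ.isCycleOn
  exact (Set.eq_univ_of_forall fun x => Equiv.Perm.mem_support.mp (hsupp ▸ mem_univ x)).symm

theorem Equiv.Perm.IsCycleOn.pow_apply_eq_pow_apply_iff [Fintype X] (hσ : σ.IsCycleOn .univ)
    (x : X) {a b : ℕ} : (σ ^ a) x = (σ ^ b) x ↔ a ≡ b [MOD Fintype.card X] := by
  rw [← coe_univ] at hσ
  exact hσ.pow_apply_eq_pow_apply (mem_univ x)

namespace GapTuple

variable {d : ℕ} (i : Fin d → ℕ)

def cumSum (k : Fin d) : ℕ := ∑ m ∈ Iio k, i m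

theorem cumSum_zero [NeZero d] : cumSum i 0 = 0 := by
  simp [cumSum]

theorem cumSum_add_self (k : Fin d) : cumSum i k + i k = ∑ m ∈ Iic k, i m := by
  rw [Iic_eq_cons_Iio, sum_cons, add_comm, cumSum]

theorem cumSum_add_self_le {k k' : Fin d} (h : k < k') : cumSum i k + i k ≤ cumSum i k' := by
  rw [cumSum_add_self]
  exact sum_le_sum_of_subset fun m hm => mem_Iio.mpr ((mem_Iic.mp hm).trans_lt h)

theorem cumSum_add_self_le_sum (k : Fin d) : cumSum i k + i k ≤ ∑ m, i m := by
  rw [cumSum_add_self]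
  exact sum_le_sum_of_subset (subset_univ _)

theorem cumSum_strictMono (hpos : ∀ k, 0 < i k) : StrictMono (cumSum i) := fun k _ h =>
  (Nat.lt_add_of_pos_right (hpos k)).trans_le (cumSum_add_self_le i h)

theorem cumSum_add_one [NeZero d] {k : Fin d} (hk : (k : ℕ) + 1 < d) :
    cumSum i (k + 1) = cumSum i k + i k := by
  rw [cumSum_add_self, cumSum]
  congr 1
  ext m
  simp only [mem_Iio, mem_Iic, Fin.lt_def, Fin.le_def, Fin.val_add_one_of_lt' hk]
  omega

theorem cumSum_add_self_modEq [NeZero d] (k : Fin d) :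
    cumSum i k + i k ≡ cumSum i (k + 1) [MOD ∑ m, i m] := by
  by_cases hk : (k : ℕ) + 1 < d
  · rw [cumSum_add_one i hk]
  · have hlast : Iic k = univ := by
      ext m; simp only [mem_Iic, mem_univ, iff_true, Fin.le_def]; omega
    have hwrap : k + 1 = 0 := by
      rw [Fin.ext_iff, Fin.val_add, Fin.val_zero, Fin.val_one', Nat.add_mod_mod,
        show (k : ℕ) + 1 = d by omega, Nat.mod_self]
    rw [cumSum_add_self, hlast, hwrap, cumSum_zero]
    exact Nat.modEq_zero_iff_dvd.mpr dvd_rfl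

theorem apply_eq_pow_cumSum_apply [NeZero d] {j : Fin d → X}
    (hj : ∀ k, (σ ^ i k) (j k) = j (k + 1)) (k : Fin d) : j k = (σ ^ cumSum i k) (j 0) := by
  obtain ⟨m, hm⟩ := k
  induction m with
  | zero => rw [Fin.mk_zero', cumSum_zero, pow_zero, Equiv.Perm.one_apply]
  | succ m ih =>
    have hsucc : (⟨m + 1, hm⟩ : Fin d) = ⟨m, by omega⟩ + 1 := by
      ext; rw [Fin.val_add_one_of_lt' hm]
    rw [hsucc, ← hj, ih (by omega), cumSum_add_one i hm, add_comm, pow_add, Equiv.Perm.mul_apply]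

variable [Fintype X] [NeZero d]

def IsGapTuple (σ : Equiv.Perm X) (i : Fin d → ℕ) (j : Fin d → X) : Prop :=
  Function.Injective j ∧ ∀ k : Fin d, (σ ^ i k) (j k) = j (k + 1) ∧
    ∀ l, 0 < l → l < i k → ∀ k' : Fin d, (σ ^ l) (j k) ≠ j k'

variable {i}

theorem isGapTuple_pow_cumSum_apply (hσ : σ.IsCycleOn .univ) (hpos : ∀ k, 0 < i k)
    (hsum : ∑ k, i k = Fintype.card X) (x : X) :
    IsGapTuple σ i fun k => (σ ^ cumSum i k) x := by
  have hlt (k : Fin d) : cumSum i k < Fintype.card X :=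
    hsum ▸ (Nat.lt_add_of_pos_right (hpos k)).trans_le (cumSum_add_self_le_sum i k)
  have hinj {a b : ℕ} (ha : a < Fintype.card X) (hb : b < Fintype.card X)
      (h : (σ ^ a) x = (σ ^ b) x) : a = b :=
    ((hσ.pow_apply_eq_pow_apply_iff x).mp h).eq_of_lt_of_lt ha hb
  refine ⟨fun k k' h => (cumSum_strictMono i hpos).injective (hinj (hlt k) (hlt k') h),
    fun k => ⟨?_, fun l hl0 hli k' h => ?_⟩⟩
  · rw [← Equiv.Perm.mul_apply, ← pow_add, hσ.pow_apply_eq_pow_apply_iff, add_comm, ← hsum]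
    exact cumSum_add_self_modEq i k
  · -- `h` would put a partial sum strictly between `cumSum i k` and `cumSum i k + i k`.
    rw [← Equiv.Perm.mul_apply, ← pow_add] at h
    have hle := cumSum_add_self_le_sum i k
    have heq := hinj (by omega) (hlt k') h
    have hkk' : k < k' := (cumSum_strictMono i hpos).lt_iff_lt.mp (by omega)
    have := cumSum_add_self_le i hkk'
    omega

theorem card_isGapTuple (hσ : σ.IsCycleOn .univ) (hpos : ∀ k, 0 < i k)
    (hsum : ∑ k, i k = Fintype.card X) :
    Nat.card {j // IsGapTuple σ i j} = Fintype.card X := by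
  rw [← Nat.card_eq_fintype_card]
  refine Nat.card_congr ⟨fun j => j.1 0, fun x => ⟨_, isGapTuple_pow_cumSum_apply hσ hpos hsum x⟩,
    fun j => Subtype.ext (funext fun k => ?_), fun x => ?_⟩
  · exact (apply_eq_pow_cumSum_apply i (fun k => (j.2.2 k).1) k).symm
  · simp only [cumSum_zero, pow_zero, Equiv.Perm.one_apply]

end GapTuple

theorem count_tuples_on_n_cycle_general (n d : ℕ) [NeZero d]
    (α : Equiv.Perm (Fin n)) (hα : α.IsCycle ∧ α.support.card = n)
    (i : Fin d → ℕ) (hpos : ∀ k, 0 < i k) (hsum : ∑ k, i k = n) :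
    Nat.card {j : Fin d → Fin n // Function.Injective j ∧
      ∀ k : Fin d, (α ^ i k) (j k) = j (k + 1) ∧
        ∀ l, 0 < l → l < i k → ∀ k' : Fin d, (α ^ l) (j k) ≠ j k'} = n := by
  have hfull : α.IsCycleOn .univ := hα.1.isCycleOn_univ (by rw [hα.2, Fintype.card_fin])
  have := GapTuple.card_isGapTuple hfull hpos (by rw [hsum, Fintype.card_fin])
  rwa [Fintype.card_fin] at this

/-- Let `α` be an `n`-cycle in `S_n` and `d ≤ n`.  Fix positive integers `i₁,…,i_d`
with `i₁ + ⋯ + i_d = n`.  Then the number of `d`-tuples `(j₁,…,j_d)` of distinct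
points such that, walking along `α` starting from `j_k`, the first element of
`{j₁,…,j_d}` encountered is `j_{k+1 (mod d)}`, at distance `i_k`, equals `n`. -/
theorem count_tuples_on_n_cycle (n d : ℕ) [NeZero d] (hdn : d ≤ n)
    (α : Equiv.Perm (Fin n)) (hα : α.IsCycle ∧ α.support.card = n)
    (i : Fin d → ℕ) (hpos : ∀ k, 0 < i k) (hsum : ∑ k, i k = n) :
    Nat.card {j : Fin d → Fin n // Function.Injective j ∧
      ∀ k : Fin d, (α ^ i k) (j k) = j (k + 1) ∧
        ∀ l, 0 < l → l < i k → ∀ k' : Fin d, (α ^ l) (j k) ≠ j k'} = n :=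
  count_tuples_on_n_cycle_general n d α hα i hpos hsum
end

section
/- For any d-cycle β ∈ S_d, the operator Δ_β = (1/d) Σ_{δ ∈ S_d} Σ_{a₁,…,a_d ≥ 1} p̂_{βδ}(a₁,…,a_d) ∂/∂p̂_δ(a₁,…,a_d) is independent of the choice of the d-cycle β; in particular Δ_β = Δ_d for all d-cycles β. -/
/-! Any two `d`-cycles are conjugate in `S_d`, and `Δ_β` depends only on the conjugacy class
of `β`: conjugation by `γ` carries the cycles of `δ` onto those of `γ δ γ⁻¹`, so
`p̂_{γδγ⁻¹}(a) = p̂_δ(a ∘ γ)` and likewise for `∂/∂p̂`; the substitutions `δ ↦ γ δ γ⁻¹`,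
`a ↦ a ∘ γ` in the double sum then turn `Δ_{γβγ⁻¹}` into `Δ_β`. -/

open MvPolynomial

noncomputable def PhiMap (n : ℕ) (σ : Equiv.Perm (Fin n)) : MvPolynomial ℕ ℂ :=
  (σ.cycleType.map fun m => (X m : MvPolynomial ℕ ℂ)).prod *
    (X 1 : MvPolynomial ℕ ℂ) ^ (n - σ.support.card)

/-- The set of cycles (orbits, including fixed points) of a permutation of `Fin d`. -/
noncomputable def orbitsOf {d : ℕ} (δ : Equiv.Perm (Fin d)) : Finset (Finset (Fin d)) :=
  Finset.univ.image fun j => Finset.univ.filter fun k => δ.SameCycle j k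

/-- The multiset of sums `Σ_{j ∈ δ_i} a_j` over the cycles `δ_i` of `δ`. -/
noncomputable def orbitSums {d : ℕ} (δ : Equiv.Perm (Fin d)) (a : Fin d → ℕ) :
    Multiset ℕ :=
  (orbitsOf δ).val.map fun O => ∑ j ∈ O, a j

/-- `p̂_δ(a₁,…,a_d) = ∏_i p_{Σ_{j∈δ_i} a_j}`. -/
noncomputable def phat {d : ℕ} (δ : Equiv.Perm (Fin d)) (a : Fin d → ℕ) :
    MvPolynomial ℕ ℂ :=
  ((orbitSums δ a).map fun m => (X m : MvPolynomial ℕ ℂ)).prod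

/-- `∂/∂p̂_δ(a₁,…,a_d) = ∏_i ((Σ_{j∈δ_i} a_j) ∂/∂p_{Σ_{j∈δ_i} a_j})` applied to `F`
(the partial derivatives commute, so they are applied in a canonical order). -/
noncomputable def phatDeriv {d : ℕ} (δ : Equiv.Perm (Fin d)) (a : Fin d → ℕ)
    (F : MvPolynomial ℕ ℂ) : MvPolynomial ℕ ℂ :=
  ((orbitSums δ a).map fun m => (m : ℂ)).prod •
    ((orbitSums δ a).sort (· ≤ ·)).foldr (fun m G => pderiv m G) F

/-- `Δ_β = (1/d) Σ_{δ ∈ S_d} Σ_{a₁,…,a_d ≥ 1} p̂_{βδ}(a) ∂/∂p̂_δ(a)`. -/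
noncomputable def DeltaBeta {d : ℕ} (β : Equiv.Perm (Fin d))
    (F : MvPolynomial ℕ ℂ) : MvPolynomial ℕ ℂ :=
  (1 / (d : ℂ)) • ∑ δ : Equiv.Perm (Fin d),
    ∑ᶠ (a : Fin d → ℕ) (_ : ∀ j, 1 ≤ a j), phat (β * δ) a * phatDeriv δ a F

/-- The `d`-cycle `(d d-1 … 2 1)` sending `k` to `k - 1 (mod d)`. -/
def rotCycle (d : ℕ) [NeZero d] : Equiv.Perm (Fin d) := Equiv.subRight (1 : Fin d)

/-- `Δ_d = Δ_{(d … 2 1)}`. -/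
noncomputable def DeltaD (d : ℕ) [NeZero d] (F : MvPolynomial ℕ ℂ) :
    MvPolynomial ℕ ℂ :=
  DeltaBeta (rotCycle d) F

theorem orbitsOf_conj {d : ℕ} (γ δ : Equiv.Perm (Fin d)) :
    orbitsOf (γ * δ * γ⁻¹) = (orbitsOf δ).image (Finset.image γ) := by
  unfold orbitsOf
  rw [Finset.image_image]
  conv_lhs => rw [← Finset.image_univ_equiv γ, Finset.image_image]
  refine Finset.image_congr fun j _ => ?_
  ext k
  simp only [Function.comp_apply, Finset.mem_filter, Finset.mem_univ, true_and,
    Finset.mem_image, Equiv.Perm.sameCycle_conj, Equiv.Perm.coe_inv, Equiv.symm_apply_apply]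
  constructor
  · rintro ⟨-, h⟩
    exact ⟨γ⁻¹ k, h, by simp⟩
  · rintro ⟨x, hx, rfl⟩
    exact ⟨⟨x, rfl⟩, by simpa using hx⟩

theorem orbitSums_conj {d : ℕ} (γ δ : Equiv.Perm (Fin d)) (a : Fin d → ℕ) :
    orbitSums (γ * δ * γ⁻¹) a = orbitSums δ (a ∘ γ) := by
  unfold orbitSums
  rw [orbitsOf_conj,
    Finset.image_val_of_injOn ((Finset.image_injective γ.injective).injOn),
    Multiset.map_map]
  apply Multiset.map_congr rfl
  intro O _
  simp only [Function.comp_apply]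
  rw [Finset.sum_image (fun x _ y _ h => γ.injective h)]

theorem phat_conj {d : ℕ} (γ σ : Equiv.Perm (Fin d)) (a : Fin d → ℕ) :
    phat (γ * σ * γ⁻¹) a = phat σ (a ∘ γ) := by
  simp only [phat, orbitSums_conj]

theorem phatDeriv_conj {d : ℕ} (γ σ : Equiv.Perm (Fin d)) (a : Fin d → ℕ)
    (F : MvPolynomial ℕ ℂ) :
    phatDeriv (γ * σ * γ⁻¹) a F = phatDeriv σ (a ∘ γ) F := by
  simp only [phatDeriv, orbitSums_conj]

theorem finsum_forall_comp_equiv {ι κ α M : Type*} [AddCommMonoid M] (e : ι ≃ κ)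
    (p : α → Prop) (f : (ι → α) → M) :
    ∑ᶠ (a : κ → α) (_ : ∀ k, p (a k)), f (a ∘ e) =
      ∑ᶠ (b : ι → α) (_ : ∀ i, p (b i)), f b := by
  rw [← finsum_comp_equiv (e.arrowCongr (Equiv.refl α))]
  refine finsum_congr fun b => ?_
  simp [Function.comp_def, e.forall_congr_left]

theorem DeltaBeta_conj {d : ℕ} (γ β : Equiv.Perm (Fin d)) (F : MvPolynomial ℕ ℂ) :
    DeltaBeta (γ * β * γ⁻¹) F = DeltaBeta β F := by
  unfold DeltaBeta
  congr 1
  rw [← (MulAut.conj γ).toEquiv.sum_comp]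
  refine Fintype.sum_congr _ _ fun σ => ?_
  have hmul : γ * β * γ⁻¹ * (γ * σ * γ⁻¹) = γ * (β * σ) * γ⁻¹ := by group
  simp only [MulEquiv.toEquiv_eq_coe, MulEquiv.coe_toEquiv, MulAut.conj_apply, hmul,
    phat_conj, phatDeriv_conj]
  exact finsum_forall_comp_equiv γ (1 ≤ ·) fun a => phat (β * σ) a * phatDeriv σ a F

theorem DeltaBeta_eq_of_isConj {d : ℕ} {β β' : Equiv.Perm (Fin d)} (h : IsConj β β')
    (F : MvPolynomial ℕ ℂ) : DeltaBeta β F = DeltaBeta β' F := by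
  obtain ⟨γ, rfl⟩ := isConj_iff.mp h
  exact (DeltaBeta_conj γ β F).symm

theorem rotCycle_eq_finRotate_inv (d : ℕ) [NeZero d] : rotCycle d = (finRotate d)⁻¹ := by
  rw [eq_inv_iff_mul_eq_one]
  ext k
  simp [rotCycle, finRotate_apply]

theorem isCycle_rotCycle {d : ℕ} [NeZero d] (hd : 2 ≤ d) : (rotCycle d).IsCycle := by
  rw [rotCycle_eq_finRotate_inv]
  exact (isCycle_finRotate_of_le hd).inv

theorem card_support_rotCycle {d : ℕ} [NeZero d] (hd : 2 ≤ d) :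
    (rotCycle d).support.card = d := by
  rw [rotCycle_eq_finRotate_inv, Equiv.Perm.support_inv, support_finRotate_of_le hd,
    Finset.card_univ, Fintype.card_fin]

/-- For any `d`-cycle `β ∈ S_d`, the operator
`Δ_β = (1/d) Σ_{δ ∈ S_d} Σ_{a₁,…,a_d ≥ 1} p̂_{βδ}(a) ∂/∂p̂_δ(a)` is independent of the
choice of the `d`-cycle `β`; in particular `Δ_β = Δ_d` for every `d`-cycle `β`. -/
theorem DeltaBeta_eq_DeltaD (d : ℕ) [NeZero d] (β : Equiv.Perm (Fin d))
    (hβ : β.IsCycle ∧ β.support.card = d) (F : MvPolynomial ℕ ℂ) :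
    DeltaBeta β F = DeltaD d F := by
  obtain ⟨hcycle, hcard⟩ := hβ
  have hd : 2 ≤ d := hcard ▸ hcycle.two_le_card_support
  refine DeltaBeta_eq_of_isConj (hcycle.isConj (isCycle_rotCycle hd) ?_) F
  rw [card_support_rotCycle hd, hcard]
end

section
/- Let α ∈ S_n and let i₁, i₂ be positive integers with i₁ ≠ i₂. The number of pairs (j₁, j₂) of points lying in a common cycle of α of length i₁+i₂ with α^{i₂}(j₂) = j₁ and α^{i₁}(j₁) = j₂ equals c·(i₁+i₂), where c is the number of cycles of α of length i₁+i₂; and for each such pair, (j₁ j₂)·α has the same cycles as α except the cycle through j₁, j₂ is split into two cycles of lengths i₁ and i₂. -/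
/-!
A pair is determined by its first point `x`, the second being `α ^ i₁ x`, so the pairs are counted
by the points on cycles of length `i₁ + i₂`. For the splitting, composing with the transposition
`(x y)`, `y = α ^ i₁ x`, changes `α` only at `α⁻¹ x` and `α⁻¹ y`, redirecting them to `y` and `x`:
the arc `x, α x, …, α ^ (i₁ - 1) x` closes up into a cycle of length `i₁`, and the arc from `y`
into one of length `i₂`. By the symmetry `(x y) = (y x)` it suffices to treat the arc through `x`.
-/

open Function

namespace Equiv.Perm

variable {X : Type*}

theorem pow_minimalPeriod_apply (σ : Perm X) (x : X) : (σ ^ minimalPeriod σ x) x = x := by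
  rw [← iterate_eq_pow]; exact iterate_minimalPeriod

variable {σ : Perm X}

theorem minimalPeriod_pow_apply {x : X} (hx : 0 < minimalPeriod σ x) (n : ℕ) :
    minimalPeriod σ ((σ ^ n) x) = minimalPeriod σ x := by
  rw [← iterate_eq_pow, minimalPeriod_apply_iterate (minimalPeriod_pos_iff_mem_periodicPts.1 hx)]

theorem isPeriodicPt_iff_pow_apply_eq_self {n : ℕ} {x : X} :
    IsPeriodicPt σ n x ↔ (σ ^ n) x = x := by
  rw [IsPeriodicPt, IsFixedPt, iterate_eq_pow]

theorem pow_apply_eq_pow_apply_iff_of_lt_minimalPeriod {x : X} {a b : ℕ}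
    (ha : a < minimalPeriod σ x) (hb : b < minimalPeriod σ x) :
    (σ ^ a) x = (σ ^ b) x ↔ a = b := by
  simpa only [iterate_eq_pow] using iterate_eq_iterate_iff_of_lt_minimalPeriod ha hb

theorem SameCycle.exists_pow_eq_of_lt_minimalPeriod {x y : X} (h : σ.SameCycle x y)
    (hx : 0 < minimalPeriod σ x) : ∃ k < minimalPeriod σ x, (σ ^ k) x = y := by
  obtain ⟨i, rfl⟩ := h
  refine ⟨(i % (minimalPeriod σ x : ℤ)).toNat, ?_, ?_⟩
  · have := Int.emod_lt_of_pos i (Int.natCast_pos.2 hx)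
    omega
  · rw [← zpow_natCast, Int.toNat_of_nonneg (Int.emod_nonneg i (by omega))]
    exact MulAction.zpow_smul_mod_minimalPeriod σ x i

theorem card_pair_subtype_eq_card_minimalPeriod_eq (p q : ℕ) :
    Nat.card {t : X × X // σ.SameCycle t.1 t.2 ∧ minimalPeriod σ t.1 = p + q ∧
        (σ ^ q) t.2 = t.1 ∧ (σ ^ p) t.1 = t.2} =
      Nat.card {x : X // minimalPeriod σ x = p + q} :=
  Nat.card_congr
    { toFun := fun t => ⟨t.1.1, t.2.2.1⟩
      invFun := fun ⟨x, hx⟩ => ⟨(x, (σ ^ p) x), ⟨p, by rw [zpow_natCast]⟩, hx,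
        by rw [← mul_apply, ← pow_add, add_comm, ← hx, pow_minimalPeriod_apply], rfl⟩
      left_inv := fun ⟨⟨_, _⟩, _, _, _, h⟩ => Subtype.ext (Prod.ext rfl h)
      right_inv := fun _ => rfl }

variable [DecidableEq X]

theorem swap_mul_pow_apply_of_forall_ne {a b z : X} {m : ℕ}
    (h : ∀ k, 0 < k → k ≤ m → (σ ^ k) z ≠ a ∧ (σ ^ k) z ≠ b) :
    ((swap a b * σ) ^ m) z = (σ ^ m) z := by
  induction m with
  | zero => rfl
  | succ m ih =>
    obtain ⟨ha, hb⟩ := h (m + 1) m.succ_pos le_rfl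
    rw [pow_succ', mul_apply, ih fun k hk hkm => h k hk (hkm.trans m.le_succ), mul_apply,
      ← mul_apply σ, ← pow_succ', swap_apply_of_ne_of_ne ha hb]

theorem swap_mul_apply_of_not_sameCycle {a b z : X} (hab : σ.SameCycle a b)
    (hz : ¬ σ.SameCycle z a) : (swap a b * σ) z = σ z := by
  have hσz : σ.SameCycle z (σ z) := sameCycle_apply_right.2 (.refl σ z)
  exact swap_apply_of_ne_of_ne (fun h => hz (h ▸ hσz)) (fun h => hz ((h ▸ hσz).trans hab.symm))

variable {x : X} {p q : ℕ}

theorem swap_mul_pow_apply_of_lt (hx : minimalPeriod σ x = p + q) (hq : 0 < q) {k : ℕ}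
    (hk : k < p) : ((swap x ((σ ^ p) x) * σ) ^ k) x = (σ ^ k) x := by
  refine swap_mul_pow_apply_of_forall_ne fun j hj hjk => ⟨fun h => ?_, fun h => ?_⟩
  · have := (isPeriodicPt_iff_pow_apply_eq_self.2 h).eq_zero_of_lt_minimalPeriod
      (by omega)
    omega
  · have := (pow_apply_eq_pow_apply_iff_of_lt_minimalPeriod (by omega) (by omega)).1 h
    omega

theorem swap_mul_pow_apply_self (hx : minimalPeriod σ x = p + q) (hp : 0 < p) (hq : 0 < q) :
    ((swap x ((σ ^ p) x) * σ) ^ p) x = x := by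
  obtain ⟨k, rfl⟩ := Nat.exists_eq_add_one_of_ne_zero hp.ne'
  rw [pow_succ', mul_apply, swap_mul_pow_apply_of_lt hx hq k.lt_succ_self, mul_apply,
    ← mul_apply σ, ← pow_succ', swap_apply_right]

theorem minimalPeriod_swap_mul (hx : minimalPeriod σ x = p + q) (hp : 0 < p) (hq : 0 < q) :
    minimalPeriod (swap x ((σ ^ p) x) * σ) x = p := by
  set τ := swap x ((σ ^ p) x) * σ
  have hper : IsPeriodicPt τ p x :=
    isPeriodicPt_iff_pow_apply_eq_self.2 (swap_mul_pow_apply_self hx hp hq)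
  refine (hper.minimalPeriod_le hp).antisymm (not_lt.1 fun hlt => ?_)
  have hback := pow_minimalPeriod_apply τ x
  rw [swap_mul_pow_apply_of_lt hx hq hlt] at hback
  have := (isPeriodicPt_iff_pow_apply_eq_self.2 hback).eq_zero_of_lt_minimalPeriod
    (by omega)
  exact (hper.minimalPeriod_pos hp).ne' this

theorem not_sameCycle_swap_mul (hx : minimalPeriod σ x = p + q) (hp : 0 < p) (hq : 0 < q) :
    ¬ (swap x ((σ ^ p) x) * σ).SameCycle x ((σ ^ p) x) := by
  intro h
  have hτ := minimalPeriod_swap_mul hx hp hq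
  obtain ⟨k, hk, hkx⟩ := h.exists_pow_eq_of_lt_minimalPeriod (by omega)
  rw [hτ] at hk
  rw [swap_mul_pow_apply_of_lt hx hq hk] at hkx
  have := (pow_apply_eq_pow_apply_iff_of_lt_minimalPeriod (by omega) (by omega)).1 hkx
  omega

end Equiv.Perm

open Equiv.Perm

theorem cut_count_and_split_general (n : ℕ) (α : Equiv.Perm (Fin n)) (i₁ i₂ c : ℕ)
    (h₁ : 0 < i₁) (h₂ : 0 < i₂)
    (hc : Nat.card {x : Fin n // Function.minimalPeriod ⇑α x = i₁ + i₂}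
      = c * (i₁ + i₂)) :
    Nat.card {t : Fin n × Fin n // α.SameCycle t.1 t.2 ∧
        Function.minimalPeriod ⇑α t.1 = i₁ + i₂ ∧
        (α ^ i₂) t.2 = t.1 ∧ (α ^ i₁) t.1 = t.2} = c * (i₁ + i₂) ∧
    ∀ j₁ j₂ : Fin n, α.SameCycle j₁ j₂ →
      Function.minimalPeriod ⇑α j₁ = i₁ + i₂ →
      (α ^ i₂) j₂ = j₁ → (α ^ i₁) j₁ = j₂ →
      (¬ (Equiv.swap j₁ j₂ * α).SameCycle j₁ j₂ ∧
        Function.minimalPeriod ⇑(Equiv.swap j₁ j₂ * α) j₁ = i₁ ∧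
        Function.minimalPeriod ⇑(Equiv.swap j₁ j₂ * α) j₂ = i₂ ∧
        ∀ x : Fin n, ¬ α.SameCycle x j₁ → (Equiv.swap j₁ j₂ * α) x = α x) := by
  refine ⟨(card_pair_subtype_eq_card_minimalPeriod_eq i₁ i₂).trans hc, ?_⟩
  intro j₁ j₂ hsc hmp₁ hpow₂ hpow₁
  have hmp₂ : Function.minimalPeriod α j₂ = i₂ + i₁ := by
    rw [← hpow₁, minimalPeriod_pow_apply (by omega), hmp₁, add_comm]
  refine ⟨hpow₁ ▸ not_sameCycle_swap_mul hmp₁ h₁ h₂, hpow₁ ▸ minimalPeriod_swap_mul hmp₁ h₁ h₂,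
    ?_, fun x hx => swap_mul_apply_of_not_sameCycle hsc hx⟩
  rw [Equiv.swap_comm, ← hpow₂]
  exact minimalPeriod_swap_mul hmp₂ h₂ h₁

/-- Let `α ∈ S_n` and `i₁ ≠ i₂` positive.  The number of pairs `(j₁, j₂)` lying in a
common cycle of `α` of length `i₁+i₂` with `α^{i₂}(j₂) = j₁` and `α^{i₁}(j₁) = j₂`
equals `c·(i₁+i₂)`, where `c` is the number of cycles of `α` of length `i₁+i₂`
(encoded by the fact that the set of points on such cycles has cardinality
`c·(i₁+i₂)`); and for each such pair, `(j₁ j₂)·α` has the same cycles as `α` except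
that the cycle through `j₁, j₂` is split into two cycles of lengths `i₁` and `i₂`. -/
theorem cut_count_and_split (n : ℕ) (α : Equiv.Perm (Fin n)) (i₁ i₂ c : ℕ)
    (h₁ : 0 < i₁) (h₂ : 0 < i₂) (hne : i₁ ≠ i₂)
    (hc : Nat.card {x : Fin n // Function.minimalPeriod ⇑α x = i₁ + i₂}
      = c * (i₁ + i₂)) :
    Nat.card {t : Fin n × Fin n // α.SameCycle t.1 t.2 ∧
        Function.minimalPeriod ⇑α t.1 = i₁ + i₂ ∧
        (α ^ i₂) t.2 = t.1 ∧ (α ^ i₁) t.1 = t.2} = c * (i₁ + i₂) ∧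
    ∀ j₁ j₂ : Fin n, α.SameCycle j₁ j₂ →
      Function.minimalPeriod ⇑α j₁ = i₁ + i₂ →
      (α ^ i₂) j₂ = j₁ → (α ^ i₁) j₁ = j₂ →
      (¬ (Equiv.swap j₁ j₂ * α).SameCycle j₁ j₂ ∧
        Function.minimalPeriod ⇑(Equiv.swap j₁ j₂ * α) j₁ = i₁ ∧
        Function.minimalPeriod ⇑(Equiv.swap j₁ j₂ * α) j₂ = i₂ ∧
        ∀ x : Fin n, ¬ α.SameCycle x j₁ → (Equiv.swap j₁ j₂ * α) x = α x) :=
  cut_count_and_split_general n α i₁ i₂ c h₁ h₂ hc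
end
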